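/- In a finite binary-action supermodular game, the set of Nash equilibria is nonempty and closed under the operations x, y ↦ f⁺(x ∨ y) and x, y ↦ f⁻(x ∧ y); in particular, for any two equilibria x and y, f⁺(x ∨ y) is the least Nash equilibrium that is above both x and y, and f⁻(x ∧ y) is the greatest Nash equilibrium below both. -/

import Mathlib

variable {V : Type*} [Fintype V] [DecidableEq V]

/-- A configuration assigns each player an action in `{-1, +1}` (as integers). -/
def Conf (x : V → ℤ) : Prop := ∀ i, x i = 1 ∨ x i = -1

/-- Supermodularity (increasing differences) for a binary-action game with
utilities `u`. -/
def Supermodular (u : V → (V → ℤ) → ℝ) : Prop :=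
  ∀ (i : V) (x y : V → ℤ), Conf x → Conf y → (∀ j, j ≠ i → y j ≤ x j) →
    u i (Function.update y i 1) - u i (Function.update y i (-1)) ≤
      u i (Function.update x i 1) - u i (Function.update x i (-1))

/-- One step of an improvement path: a single player flips her action and
strictly increases her utility. -/
def ImpStep (u : V → (V → ℤ) → ℝ) (x y : V → ℤ) : Prop :=
  ∃ i : V, y = Function.update x i (-(x i)) ∧ u i x < u i y

/-- A monotone improvement step (the active player switches from -1 to +1). -/
def MonStep (u : V → (V → ℤ) → ℝ) (x y : V → ℤ) : Prop :=
  ImpStep u x y ∧ x ≤ y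

/-- An anti-monotone improvement step (the active player switches from +1 to -1). -/
def AntiStep (u : V → (V → ℤ) → ℝ) (x y : V → ℤ) : Prop :=
  ImpStep u x y ∧ y ≤ x

/-- `y` is reachable from `x` by an improvement path. -/
def ImpReach (u : V → (V → ℤ) → ℝ) : (V → ℤ) → (V → ℤ) → Prop :=
  Relation.ReflTransGen (ImpStep u)

/-- `y` is reachable from `x` by a monotone improvement path. -/
def MonReach (u : V → (V → ℤ) → ℝ) : (V → ℤ) → (V → ℤ) → Prop :=
  Relation.ReflTransGen (MonStep u)

/-- `y` is reachable from `x` by an anti-monotone improvement path. -/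
def AntiReach (u : V → (V → ℤ) → ℝ) : (V → ℤ) → (V → ℤ) → Prop :=
  Relation.ReflTransGen (AntiStep u)

/-- `x` is a (pure strategy Nash) equilibrium: no unilateral flip strictly
improves the deviator's utility. -/
def IsNash (u : V → (V → ℤ) → ℝ) (x : V → ℤ) : Prop :=
  ∀ i : V, u i (Function.update x i (-(x i))) ≤ u i x

open Classical in
/-- `fplus u x` is the componentwise supremum of the set of configurations
reachable from `x` by monotone improvement paths. -/
noncomputable def fplus (u : V → (V → ℤ) → ℝ) (x : V → ℤ) : V → ℤ :=
  fun i => if ∃ y, MonReach u x y ∧ y i = 1 then 1 else -1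

open Classical in
/-- `fminus u x` is the componentwise infimum of the set of configurations
reachable from `x` by anti-monotone improvement paths. -/
noncomputable def fminus (u : V → (V → ℤ) → ℝ) (x : V → ℤ) : V → ℤ :=
  fun i => if ∃ y, AntiReach u x y ∧ y i = -1 then -1 else 1

/-!
Write `gain u i x` for what player `i` gains by playing `+1` rather than `-1` against `x`;
supermodularity says that it is monotone in `x`. Call `w` sub-Nash if no player at `+1` would
rather play `-1`. From a sub-Nash `w`, monotone improvement steps keep the configuration sub-Nash,
so they can only stop at an equilibrium `t`, and they stop because each one removes a player from
the `-1` side. A monotone path from `w` never overtakes an equilibrium `z ≥ w`: a player switching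
up at `b ≤ z` gains at `b`, hence at `z`, where she therefore already plays `+1`. So `t` is the
least equilibrium above `w`, and it is `fplus u w`. The all-`(-1)` configuration and the join of
two equilibria are sub-Nash. Relabelling the actions by `a ↦ -a` reverses the order and turns
`fminus` into `fplus`, which gives the dual statements.
-/

open Function

section Game

variable {ι : Type*} {x y z w t : ι → ℤ}

lemma Conf.sup (hx : Conf x) (hy : Conf y) : Conf (x ⊔ y) := fun i => by
  rcases le_total (x i) (y i) with h | h
  · simpa [sup_of_le_right h] using hy i
  · simpa [sup_of_le_left h] using hx i

lemma Conf.inf (hx : Conf x) (hy : Conf y) : Conf (x ⊓ y) := fun i => by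
  rcases le_total (x i) (y i) with h | h
  · simpa [inf_of_le_left h] using hx i
  · simpa [inf_of_le_right h] using hy i

lemma Conf.neg (hx : Conf x) : Conf (-x) := fun i => by
  rcases hx i with h | h <;> simp [h]

variable [DecidableEq ι] {u : ι → (ι → ℤ) → ℝ} {i : ι}

lemma Conf.update (hx : Conf x) {a : ℤ} (ha : a = 1 ∨ a = -1) (i : ι) :
    Conf (update x i a) := by
  intro j
  rcases eq_or_ne j i with rfl | hj
  · simpa using ha
  · simpa [update_of_ne hj] using hx j

noncomputable def gain (u : ι → (ι → ℤ) → ℝ) (i : ι) (x : ι → ℤ) : ℝ :=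
  u i (update x i 1) - u i (update x i (-1))

lemma gain_update (c : ℤ) : gain u i (update x i c) = gain u i x := by
  simp [gain]

lemma Supermodular.gain_le (hsm : Supermodular u) (hx : Conf x) (hy : Conf y) (hyx : y ≤ x) :
    gain u i y ≤ gain u i x :=
  hsm i x y hx hy fun j _ => hyx j

lemma sub_utility_flip_of_eq_neg_one (h : x i = -1) :
    u i (update x i (-x i)) - u i x = gain u i x := by
  rw [gain, ← h, update_eq_self, h, neg_neg]

lemma sub_utility_flip_of_eq_one (h : x i = 1) :
    u i (update x i (-x i)) - u i x = -gain u i x := by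
  rw [gain, ← h, update_eq_self, h, neg_sub]

def IsSubNash (u : ι → (ι → ℤ) → ℝ) (x : ι → ℤ) : Prop :=
  ∀ i, x i = 1 → 0 ≤ gain u i x

def IsSuperNash (u : ι → (ι → ℤ) → ℝ) (x : ι → ℤ) : Prop :=
  ∀ i, x i = -1 → gain u i x ≤ 0

lemma isNash_iff (hx : Conf x) : IsNash u x ↔ IsSubNash u x ∧ IsSuperNash u x := by
  simp only [IsNash, IsSubNash, IsSuperNash, ← forall_and]
  refine forall_congr' fun i => ?_
  rcases hx i with h | h
  · have := sub_utility_flip_of_eq_one (u := u) h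
    simp only [h] at this ⊢
    norm_num
    constructor <;> intro <;> linarith
  · have := sub_utility_flip_of_eq_neg_one (u := u) h
    simp only [h, neg_neg] at this ⊢
    norm_num
    constructor <;> intro <;> linarith

lemma monStep_iff (hx : Conf x) :
    MonStep u x y ↔ ∃ i, x i = -1 ∧ 0 < gain u i x ∧ y = update x i 1 := by
  constructor
  · rintro ⟨⟨i, rfl, hlt⟩, hle⟩
    have hxi : x i = -1 := (hx i).resolve_left fun h => by simpa [h] using hle i
    refine ⟨i, hxi, ?_, by rw [hxi, neg_neg]⟩
    linarith [sub_utility_flip_of_eq_neg_one (u := u) hxi]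
  · rintro ⟨i, hxi, hpos, rfl⟩
    have hflip := sub_utility_flip_of_eq_neg_one (u := u) hxi
    rw [hxi, neg_neg] at hflip
    exact ⟨⟨i, by rw [hxi, neg_neg], by linarith⟩,
      le_update_iff.2 ⟨by rw [hxi]; norm_num, fun j _ => le_rfl⟩⟩

lemma MonReach.conf (hx : Conf x) (h : MonReach u x y) : Conf y := by
  induction h with
  | refl => exact hx
  | tail _ hstep ih =>
    obtain ⟨i, -, -, rfl⟩ := (monStep_iff ih).1 hstep
    exact ih.update (Or.inl rfl) i

lemma MonReach.le (h : MonReach u x y) : x ≤ y := by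
  induction h with
  | refl => exact le_rfl
  | tail _ hstep ih => exact ih.trans hstep.2

lemma MonReach.le_of_isNash (hsm : Supermodular u) (hw : Conf w) (hz : Conf z)
    (hnz : IsNash u z) (hwz : w ≤ z) (h : MonReach u w t) : t ≤ z := by
  induction h with
  | refl => exact hwz
  | @tail b c hb hstep ih =>
    have hcb : Conf b := MonReach.conf hw hb
    obtain ⟨i, -, hpos, rfl⟩ := (monStep_iff hcb).1 hstep
    have hzi : z i = 1 := (hz i).resolve_right fun h => by
      have := ((isNash_iff hz).1 hnz).2 i h
      linarith [hsm.gain_le hz hcb ih (i := i)]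
    exact update_le_iff.2 ⟨hzi.ge, fun j _ => ih j⟩

open Finset in
theorem exists_monReach_isNash [Fintype ι] (hsm : Supermodular u) {w : ι → ℤ} (hw : Conf w)
    (hsub : IsSubNash u w) :
    ∃ t, MonReach u w t ∧ IsNash u t := by
  by_cases hstep : ∃ i, w i = -1 ∧ 0 < gain u i w
  · obtain ⟨i, hwi, hpos⟩ := hstep
    have hmon : MonStep u w (update w i 1) := (monStep_iff hw).2 ⟨i, hwi, hpos, rfl⟩
    have hcw' : Conf (update w i 1) := hw.update (Or.inl rfl) i
    have hsub' : IsSubNash u (update w i 1) := by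
      intro j hj
      rcases eq_or_ne j i with rfl | hji
      · rw [gain_update]
        exact hpos.le
      · rw [update_of_ne hji] at hj
        exact (hsub j hj).trans (hsm.gain_le hcw' hw hmon.2)
    obtain ⟨t, hrt, hnt⟩ := exists_monReach_isNash hsm hcw' hsub'
    exact ⟨t, .head hmon hrt, hnt⟩
  · push Not at hstep
    exact ⟨w, .refl, (isNash_iff hw).2 ⟨hsub, hstep⟩⟩
termination_by #{j | w j = -1}
decreasing_by
  have herase :
      ({j | update w i 1 j = -1} : Finset ι) = ({j | w j = -1} : Finset ι).erase i := by
    ext j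
    rcases eq_or_ne j i with rfl | hji <;> simp [*]
  rw [herase]
  exact card_erase_lt_of_mem (by simpa using hwi)

lemma fplus_eq_of_monReach (hsm : Supermodular u) (hz : Conf z) (hr : MonReach u z t)
    (hnt : IsNash u t) : fplus u z = t := by
  have hct : Conf t := hr.conf hz
  funext i
  rcases hct i with h | h
  · rw [fplus, if_pos ⟨t, hr, h⟩, h]
  · rw [fplus, if_neg, h]
    rintro ⟨y, hy, hyi⟩
    have := hy.le_of_isNash hsm hz hct hnt hr.le i
    rw [hyi, h] at this
    norm_num at this

theorem isLeast_fplus [Fintype ι] (hsm : Supermodular u) (hw : Conf w) (hsub : IsSubNash u w) :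
    IsLeast {z | Conf z ∧ IsNash u z ∧ w ≤ z} (fplus u w) := by
  obtain ⟨t, hrt, hnt⟩ := exists_monReach_isNash hsm hw hsub
  rw [fplus_eq_of_monReach hsm hw hrt hnt]
  exact ⟨⟨hrt.conf hw, hnt, hrt.le⟩, fun z ⟨hz, hnz, hwz⟩ => hrt.le_of_isNash hsm hw hz hnz hwz⟩

lemma isSubNash_sup (hsm : Supermodular u) (hx : Conf x) (hy : Conf y) (hnx : IsNash u x)
    (hny : IsNash u y) : IsSubNash u (x ⊔ y) := by
  intro i hi
  rcases le_total (x i) (y i) with h | h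
  · rw [Pi.sup_apply, sup_of_le_right h] at hi
    exact (((isNash_iff hy).1 hny).1 i hi).trans (hsm.gain_le (hx.sup hy) hy le_sup_right)
  · rw [Pi.sup_apply, sup_of_le_left h] at hi
    exact (((isNash_iff hx).1 hnx).1 i hi).trans (hsm.gain_le (hx.sup hy) hx le_sup_left)

def dualGame (u : ι → (ι → ℤ) → ℝ) : ι → (ι → ℤ) → ℝ := fun i x => u i (-x)

lemma gain_dualGame : gain (dualGame u) i x = -gain u i (-x) := by
  simp [gain, dualGame, ← update_neg]

lemma Supermodular.dualGame (hsm : Supermodular u) : Supermodular (dualGame u) := by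
  intro i x y hx hy hyx
  change gain _ i y ≤ gain _ i x
  rw [gain_dualGame, gain_dualGame, neg_le_neg_iff]
  exact hsm i (-y) (-x) hy.neg hx.neg fun j hj => neg_le_neg (hyx j hj)

lemma isNash_dualGame_neg_iff : IsNash (dualGame u) (-x) ↔ IsNash u x := by
  simp [IsNash, dualGame, ← update_neg]

lemma isSubNash_dualGame_neg_iff : IsSubNash (dualGame u) (-x) ↔ IsSuperNash u x := by
  simp [IsSubNash, IsSuperNash, gain_dualGame, neg_eq_iff_eq_neg]

lemma antiStep_iff_monStep_dualGame : AntiStep u x y ↔ MonStep (dualGame u) (-x) (-y) := by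
  simp [AntiStep, MonStep, ImpStep, dualGame, neg_eq_iff_eq_neg, ← update_neg]

lemma antiReach_iff_monReach_dualGame : AntiReach u x y ↔ MonReach (dualGame u) (-x) (-y) := by
  constructor
  · exact Relation.ReflTransGen.lift (r := AntiStep u) (p := MonStep (dualGame u)) Neg.neg
      (fun _ _ => antiStep_iff_monStep_dualGame.1) x y
  · intro h
    simpa [onFun, AntiReach] using
      Relation.ReflTransGen.lift (r := MonStep (dualGame u)) (p := AntiStep u) Neg.neg
        (fun a b hab => antiStep_iff_monStep_dualGame.2 (by simpa using hab)) (-x) (-y) h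

lemma fminus_eq_neg_fplus_dualGame : fminus u x = -fplus (dualGame u) (-x) := by
  funext i
  have hex : (∃ y, AntiReach u x y ∧ y i = -1) ↔
      ∃ y, MonReach (dualGame u) (-x) y ∧ y i = 1 := by
    rw [← (Equiv.neg (ι → ℤ)).exists_congr_right]
    simp [antiReach_iff_monReach_dualGame, neg_eq_iff_eq_neg]
  simp only [fminus, fplus, Pi.neg_apply]
  rw [hex]
  split_ifs <;> norm_num

theorem isGreatest_fminus [Fintype ι] (hsm : Supermodular u) (hw : Conf w)
    (hsup : IsSuperNash u w) :
    IsGreatest {z | Conf z ∧ IsNash u z ∧ z ≤ w} (fminus u w) := by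
  have hset : {z | Conf z ∧ IsNash u z ∧ z ≤ w} =
      (fun z => -z) '' {z | Conf z ∧ IsNash (dualGame u) z ∧ -w ≤ z} := by
    refine Set.ext fun z => ⟨?_, ?_⟩
    · rintro ⟨hz, hnz, hzw⟩
      exact ⟨-z, ⟨hz.neg, isNash_dualGame_neg_iff.2 hnz, neg_le_neg hzw⟩, neg_neg z⟩
    · rintro ⟨z, ⟨hz, hnz, hwz⟩, rfl⟩
      exact ⟨hz.neg, isNash_dualGame_neg_iff.1 (by rwa [neg_neg]), neg_le.1 hwz⟩
  rw [fminus_eq_neg_fplus_dualGame, hset]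
  exact Antitone.map_isLeast (fun _ _ => neg_le_neg)
    (isLeast_fplus hsm.dualGame hw.neg (isSubNash_dualGame_neg_iff.2 hsup))

lemma isSuperNash_inf (hsm : Supermodular u) (hx : Conf x) (hy : Conf y) (hnx : IsNash u x)
    (hny : IsNash u y) : IsSuperNash u (x ⊓ y) := by
  rw [← isSubNash_dualGame_neg_iff, neg_inf]
  exact isSubNash_sup hsm.dualGame hx.neg hy.neg (isNash_dualGame_neg_iff.2 hnx)
    (isNash_dualGame_neg_iff.2 hny)

end Game

/-- the Nash set is nonempty; for Nash equilibria `x, y`,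
`fplus u (x ⊔ y)` is the least Nash equilibrium above both and
`fminus u (x ⊓ y)` is the greatest Nash equilibrium below both. -/
theorem nash_lattice (u : V → (V → ℤ) → ℝ) (hsm : Supermodular u) :
    (∃ x, Conf x ∧ IsNash u x) ∧
    ∀ x y : V → ℤ, Conf x → Conf y → IsNash u x → IsNash u y →
      (IsNash u (fplus u (x ⊔ y)) ∧ x ≤ fplus u (x ⊔ y) ∧ y ≤ fplus u (x ⊔ y) ∧
        ∀ z, Conf z → IsNash u z → x ≤ z → y ≤ z → fplus u (x ⊔ y) ≤ z) ∧
      (IsNash u (fminus u (x ⊓ y)) ∧ fminus u (x ⊓ y) ≤ x ∧ fminus u (x ⊓ y) ≤ y ∧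
        ∀ z, Conf z → IsNash u z → z ≤ x → z ≤ y → z ≤ fminus u (x ⊓ y)) := by
  refine ⟨?_, fun x y hx hy hnx hny => ⟨?_, ?_⟩⟩
  · have hbot : Conf (fun _ : V => (-1 : ℤ)) := fun _ => Or.inr rfl
    obtain ⟨⟨hc, hn, -⟩, -⟩ := isLeast_fplus hsm hbot fun i hi => by norm_num at hi
    exact ⟨_, hc, hn⟩
  · obtain ⟨⟨-, hn, hle⟩, hleast⟩ :=
      isLeast_fplus hsm (hx.sup hy) (isSubNash_sup hsm hx hy hnx hny)
    exact ⟨hn, le_sup_left.trans hle, le_sup_right.trans hle,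
      fun z hz hnz hxz hyz => hleast ⟨hz, hnz, sup_le hxz hyz⟩⟩
  · obtain ⟨⟨-, hn, hle⟩, hgreatest⟩ :=
      isGreatest_fminus hsm (hx.inf hy) (isSuperNash_inf hsm hx hy hnx hny)
    exact ⟨hn, hle.trans inf_le_left, hle.trans inf_le_right,
      fun z hz hnz hzx hzy => hgreatest ⟨hz, hnz, le_inf hzx hzy⟩⟩
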